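/- arXiv:2203.15211 — 4 statements merged into one kernel-verified Lean document; each statement's English description precedes it below -/
import Mathlib

section
/- Let h : ℝ → ℝ_{>0} be a smooth even function with h(0) > 0, h'(0) = 0, h'(r) < 0 for r > 0, and h(r) → 0 as r → ∞. Let σ : [0,∞) → ℝ ×_h S¹ be a unit-speed geodesic with σ(0) on the circle {r = 0}, whose initial angle θ(0) with the parallel circle satisfies θ(0) ≠ 0 and θ(0) ≠ π/2. Then σ is bounded, i.e., the r-coordinate of σ(t) is bounded in absolute value uniformly in t. -/
open Filter Real

/- STATEMENT 1.
h : ℝ → ℝ smooth, even, positive, with h(0) > 0, h'(0) = 0, h'(r) < 0 for r > 0,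
and h(r) → 0 as r → ∞.  A unit-speed geodesic σ = (r, φ) on the surface of revolution
ℝ ×_h S¹ (encoded by the geodesic equations and unit-speed condition as in Clairaut's
theorem), starting on the circle {r = 0}, whose initial angle θ₀ with the parallel
circle (cos θ₀ = h(0) φ'(0), θ₀ ∈ [0, π/2]) satisfies θ₀ ≠ 0 and θ₀ ≠ π/2,
is bounded: |r(t)| ≤ C for all t ≥ 0. -/
theorem bounded_geodesic_on_surface_of_revolution
    (h : ℝ → ℝ) (hsmooth : ContDiff ℝ (⊤ : ℕ∞) h) (hpos : ∀ s, 0 < h s)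
    (heven : ∀ s, h (-s) = h s)
    (h0 : 0 < h 0) (h'0 : deriv h 0 = 0) (h'neg : ∀ s > 0, deriv h s < 0)
    (hlim : Tendsto h atTop (nhds 0))
    (r φ : ℝ → ℝ) (hr : ContDiff ℝ 2 r) (hφ : ContDiff ℝ 2 φ)
    (geod₁ : ∀ t, deriv (deriv r) t = h (r t) * deriv h (r t) * (deriv φ t) ^ 2)
    (geod₂ : ∀ t, deriv (fun s => (h (r s)) ^ 2 * deriv φ s) t = 0)
    (unit : ∀ t, (deriv r t) ^ 2 + (h (r t)) ^ 2 * (deriv φ t) ^ 2 = 1)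
    (hstart : r 0 = 0)
    (θ₀ : ℝ) (hθ₀mem : θ₀ ∈ Set.Icc (0 : ℝ) (π / 2))
    (hθ₀ : Real.cos θ₀ = h 0 * deriv φ 0)
    (hne0 : θ₀ ≠ 0) (hneπ2 : θ₀ ≠ π / 2) :
    ∃ C : ℝ, ∀ t ≥ 0, |r t| ≤ C := by
  -- cos θ₀ > 0
  have hcos : 0 < Real.cos θ₀ := by
    apply Real.cos_pos_of_mem_Ioo
    constructor
    · linarith [hθ₀mem.1, Real.pi_pos]
    · exact lt_of_le_of_ne hθ₀mem.2 hneπ2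
  -- Clairaut constant
  set c : ℝ := h 0 * Real.cos θ₀ with hc_def
  have hc : 0 < c := mul_pos h0 hcos
  -- the function g is constant
  have hrdiff : Differentiable ℝ r := hr.differentiable (by norm_num)
  have hφ' : ContDiff ℝ 1 (deriv φ) := by
    have := (contDiff_succ_iff_deriv.mp (show ContDiff ℝ (1 + 1) φ by exact_mod_cast hφ)).2.2
    exact this
  have hgdiff : Differentiable ℝ (fun s => (h (r s)) ^ 2 * deriv φ s) := by
    apply Differentiable.mul
    · exact (((hsmooth.differentiable (by simp)).comp hrdiff).pow 2)
    · exact hφ'.differentiable (by norm_num)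
  have hconst : ∀ t, (h (r t)) ^ 2 * deriv φ t = c := by
    intro t
    have := is_const_of_deriv_eq_zero hgdiff geod₂ t 0
    rw [this, hstart, hc_def, hθ₀]
    ring
  -- c ≤ h (r t)
  have hlb : ∀ t, c ≤ h (r t) := by
    intro t
    have h1 : (h (r t)) ^ 2 * (deriv φ t) ^ 2 ≤ 1 := by
      have := unit t
      nlinarith [sq_nonneg (deriv r t)]
    have h2 : c ^ 2 ≤ (h (r t)) ^ 2 := by
      have := hconst t
      nlinarith [sq_nonneg (h (r t)), hpos (r t)]
    nlinarith [hpos (r t)]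
  -- find R with h s < c for s ≥ R
  obtain ⟨R, hR⟩ := (eventually_atTop.mp (hlim.eventually (gt_mem_nhds hc)))
  refine ⟨|R|, fun t _ => ?_⟩
  by_contra hcon
  push_neg at hcon
  have habs : h (|r t|) = h (r t) := by
    rcases abs_cases (r t) with ⟨he, _⟩ | ⟨he, _⟩
    · rw [he]
    · rw [he, heven]
  have : h (|r t|) < c := hR _ (le_trans (le_abs_self R) hcon.le)
  rw [habs] at this
  exact absurd (hlb t) (not_le.mpr this)
end

section
/- Define φ(x) = (√3/π) ∫₀ˣ (arctan u³)/u² du for x ≥ 0 (with the integrand extended by continuity at 0). Then 0 < φ(x) < 1 for all x ∈ (0,∞), and φ(x) → 1 as x → ∞. -/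
open Filter Real

/-- φ(x) = (√3/π) ∫₀ˣ (arctan u³)/u² du.  (The integrand takes the value 0 at u = 0,
which agrees with the continuous extension since arctan(u³)/u² → 0 as u → 0.) -/
noncomputable def phi (x : ℝ) : ℝ :=
  (Real.sqrt 3 / π) * ∫ u in (0:ℝ)..x, Real.arctan (u ^ 3) / u ^ 2

/-!
Integrating by parts, `∫ arctan (u³) / u² = -arctan (u³) / u + ∫ 3u / (1 + u⁶)`, and since
`1 + u⁶ = (1 + u²)(u⁴ - u² + 1)` the last integrand has the elementary primitive `ratPrimitive`.
The resulting primitive `F = phiPrimitive` of the integrand is continuous and strictly increasing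
on `[0, ∞)`, with `F 0 = -√3π/12` and `F → √3π/4` at infinity. Hence `∫₀^∞ = π/√3`, so
`phi x = (F x - F 0) / (√3π/4 - F 0)`, and all three claims follow.
-/

open Set Topology

theorem StrictMonoOn.lt_of_tendsto_atTop {α β : Type*} [LinearOrder α] [NoMaxOrder α]
    [TopologicalSpace β] [Preorder β] [OrderClosedTopology β] {f : α → β} {a x : α} {L : β}
    (hf : StrictMonoOn f (Ici a)) (hL : Tendsto f atTop (𝓝 L)) (hx : a ≤ x) : f x < L := by
  have : Nonempty α := ⟨x⟩
  obtain ⟨y, hxy⟩ := exists_gt x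
  refine (hf hx (hx.trans hxy.le) hxy).trans_le (ge_of_tendsto hL ?_)
  filter_upwards [eventually_ge_atTop y] with z hyz
  exact hf.monotoneOn (hx.trans hxy.le) (hx.trans (hxy.le.trans hyz)) hyz

namespace Real

theorem abs_arctan_le (x : ℝ) : |arctan x| ≤ |x| := by
  have arctan_le_self {y : ℝ} (hy : 0 ≤ y) : arctan y ≤ y :=
    (le_tan (arctan_nonneg.2 hy) (arctan_lt_pi_div_two y)).trans_eq (tan_arctan y)
  have h_neg : arctan (-x) ≤ arctan |x| := arctan_strictMono.monotone (neg_le_abs x)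
  have h_pos : arctan x ≤ arctan |x| := arctan_strictMono.monotone (le_abs_self x)
  rw [arctan_neg] at h_neg
  rw [abs_le]
  constructor <;> linarith [arctan_le_self (abs_nonneg x)]

theorem continuous_arctan_pow_div_pow {m n : ℕ} (hmn : m < n) :
    Continuous fun u : ℝ => arctan (u ^ n) / u ^ m := by
  have hn : n ≠ 0 := by omega
  have h_bound (u : ℝ) : ‖arctan (u ^ n) / u ^ m‖ ≤ |u| ^ (n - m) := by
    rcases eq_or_ne u 0 with rfl | hu
    · simp [zero_pow hn]
    · rw [Real.norm_eq_abs, abs_div, abs_pow, pow_sub₀ _ (abs_ne_zero.2 hu) hmn.le,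
        ← div_eq_mul_inv]
      exact div_le_div_of_nonneg_right ((abs_arctan_le _).trans_eq (abs_pow u n)) (by positivity)
  rw [continuous_iff_continuousAt]
  intro u
  rcases eq_or_ne u 0 with rfl | hu
  · have : Tendsto (fun u : ℝ => |u| ^ (n - m)) (𝓝 0) (𝓝 0) :=
      (continuous_abs.pow (n - m)).tendsto' 0 0 (by simp [Nat.sub_ne_zero_of_lt hmn])
    simpa [ContinuousAt, zero_pow hn] using squeeze_zero_norm h_bound this
  · exact ContinuousAt.div (by fun_prop) (by fun_prop) (pow_ne_zero m hu)

end Real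

open Real

theorem pow_four_sub_sq_add_one_pos (u : ℝ) : 0 < u ^ 4 - u ^ 2 + 1 := by
  nlinarith [sq_nonneg (2 * u ^ 2 - 1)]

noncomputable def ratPrimitive (u : ℝ) : ℝ :=
  log (1 + u ^ 2) / 2 - log (u ^ 4 - u ^ 2 + 1) / 4 + √3 / 2 * arctan ((2 * u ^ 2 - 1) / √3)

theorem hasDerivAt_ratPrimitive (u : ℝ) :
    HasDerivAt ratPrimitive (3 * u / (1 + u ^ 6)) u := by
  have hq := pow_four_sub_sq_add_one_pos u
  have h3 : √3 ^ 2 = 3 := sq_sqrt zero_le_three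
  have h_log₁ := (((hasDerivAt_pow 2 u).const_add 1).log (by positivity)).div_const 2
  have h_log₂ := ((((hasDerivAt_pow 4 u).sub (hasDerivAt_pow 2 u)).add_const 1).log
    hq.ne').div_const 4
  have h_arctan :=
    ((((hasDerivAt_pow 2 u).const_mul 2).sub_const 1).div_const √3).arctan.const_mul (√3 / 2)
  refine ((h_log₁.sub h_log₂).add h_arctan).congr_deriv ?_
  have h6 : 1 + u ^ 6 = (1 + u ^ 2) * (u ^ 4 - u ^ 2 + 1) := by ring
  have h_den : 1 + ((2 * u ^ 2 - 1) / √3) ^ 2 = 4 * (u ^ 4 - u ^ 2 + 1) / 3 := by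
    rw [div_pow, h3]; ring
  simp only [Pi.sub_apply, h_den, h6]
  generalize hD : u ^ 4 - u ^ 2 + 1 = D at hq ⊢
  field_simp
  rw [← hD]
  ring

theorem ratPrimitive_zero : ratPrimitive 0 = -(√3 * π / 12) := by
  have h : (2 * (0 : ℝ) ^ 2 - 1) / √3 = -(√3)⁻¹ := by ring
  rw [ratPrimitive, h, arctan_neg, arctan_inv_sqrt_three]
  norm_num
  ring

theorem tendsto_arctan_div_atTop (f : ℝ → ℝ) :
    Tendsto (fun u => arctan (f u) / u) atTop (𝓝 0) := by
  refine squeeze_zero_norm' ?_ ((tendsto_const_nhds (x := π / 2)).div_atTop tendsto_id)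
  filter_upwards [eventually_gt_atTop 0] with u hu
  rw [norm_div, Real.norm_of_nonneg hu.le, id]
  gcongr
  exact abs_le.2 ⟨(neg_pi_div_two_lt_arctan _).le, (arctan_lt_pi_div_two _).le⟩

theorem tendsto_ratPrimitive_atTop : Tendsto ratPrimitive atTop (𝓝 (√3 * π / 4)) := by
  have h_denom : Tendsto (fun u : ℝ => u ^ 2 + ((u ^ 2)⁻¹ - 1)) atTop atTop :=
    tendsto_atTop_add_right_of_le _ (-1) (tendsto_pow_atTop two_ne_zero)
      fun u => by linarith [inv_nonneg.2 (sq_nonneg u)]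
  -- `(1 + u²)² = (u⁴ - u² + 1) + 3u²`, and `(u⁴ - u² + 1) / u² = u² + u⁻² - 1`
  have h_ratio : Tendsto (fun u : ℝ => (1 + u ^ 2) ^ 2 / (u ^ 4 - u ^ 2 + 1)) atTop (𝓝 1) := by
    have := (tendsto_const_nhds (x := (3 : ℝ))).div_atTop h_denom |>.const_add 1
    rw [add_zero] at this
    refine this.congr' ?_
    filter_upwards [eventually_ne_atTop 0] with u hu
    have h_eq : u ^ 2 + ((u ^ 2)⁻¹ - 1) = (u ^ 4 - u ^ 2 + 1) / u ^ 2 := by field_simp; ring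
    rw [h_eq]
    have := pow_four_sub_sq_add_one_pos u
    generalize hD : u ^ 4 - u ^ 2 + 1 = D at this ⊢
    field_simp
    rw [← hD]
    ring
  have h_log : Tendsto (fun u : ℝ => log (1 + u ^ 2) / 2 - log (u ^ 4 - u ^ 2 + 1) / 4)
      atTop (𝓝 0) := by
    have := ((continuousAt_log one_ne_zero).tendsto.comp h_ratio).div_const 4
    rw [log_one, zero_div] at this
    refine this.congr fun u => ?_
    rw [Function.comp_apply, log_div (by positivity) (pow_four_sub_sq_add_one_pos u).ne', log_pow]
    push_cast
    ring
  have h_arg : Tendsto (fun u : ℝ => (2 * u ^ 2 - 1) / √3) atTop atTop :=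
    (tendsto_atTop_add_const_right _ _
      ((tendsto_pow_atTop two_ne_zero).const_mul_atTop two_pos)).atTop_div_const (by positivity)
  have h_arctan := (tendsto_arctan_atTop.mono_right nhdsWithin_le_nhds).comp h_arg
  have := h_log.add (h_arctan.const_mul (√3 / 2))
  rwa [zero_add, show √3 / 2 * (π / 2) = √3 * π / 4 by ring] at this

noncomputable def phiPrimitive (u : ℝ) : ℝ :=
  ratPrimitive u - arctan (u ^ 3) / u

theorem hasDerivAt_phiPrimitive {u : ℝ} (hu : u ≠ 0) :
    HasDerivAt phiPrimitive (arctan (u ^ 3) / u ^ 2) u := by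
  have h_cube : HasDerivAt (fun u : ℝ => u ^ 3) (3 * u ^ 2) u := by
    simpa using hasDerivAt_pow 3 u
  refine ((hasDerivAt_ratPrimitive u).sub (h_cube.arctan.div (hasDerivAt_id u) hu)).congr_deriv ?_
  have : 1 + (u ^ 3) ^ 2 ≠ 0 := by positivity
  simp only [id]
  field_simp
  ring

theorem continuous_phiPrimitive : Continuous phiPrimitive :=
  (continuous_iff_continuousAt.2 fun u => (hasDerivAt_ratPrimitive u).continuousAt).sub
    (by simpa using continuous_arctan_pow_div_pow (m := 1) (n := 3) (by norm_num))

theorem phiPrimitive_zero : phiPrimitive 0 = -(√3 * π / 12) := by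
  simp [phiPrimitive, ratPrimitive_zero]

theorem tendsto_phiPrimitive_atTop : Tendsto phiPrimitive atTop (𝓝 (√3 * π / 4)) := by
  have := tendsto_ratPrimitive_atTop.sub (tendsto_arctan_div_atTop fun u => u ^ 3)
  rwa [sub_zero] at this

theorem integral_arctan_pow_three_div_sq {x : ℝ} (hx : 0 ≤ x) :
    ∫ u in (0 : ℝ)..x, arctan (u ^ 3) / u ^ 2 = phiPrimitive x - phiPrimitive 0 :=
  intervalIntegral.integral_eq_sub_of_hasDeriv_right_of_le hx
    continuous_phiPrimitive.continuousOn
    (fun u hu => (hasDerivAt_phiPrimitive hu.1.ne').hasDerivWithinAt)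
    ((continuous_arctan_pow_div_pow (by norm_num)).intervalIntegrable 0 x)

theorem strictMonoOn_phiPrimitive : StrictMonoOn phiPrimitive (Ici 0) := by
  refine strictMonoOn_of_deriv_pos (convex_Ici 0) continuous_phiPrimitive.continuousOn
    fun u hu => ?_
  rw [interior_Ici] at hu
  rw [(hasDerivAt_phiPrimitive (ne_of_gt hu)).deriv]
  exact div_pos (arctan_pos.2 (pow_pos hu 3)) (pow_pos hu 2)

theorem phi_mem_Ioo_and_tendsto_one :
    (∀ x > 0, 0 < phi x ∧ phi x < 1) ∧ Tendsto phi atTop (nhds 1) := by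
  have h_gap : 0 < √3 * π / 4 - phiPrimitive 0 := by
    rw [phiPrimitive_zero, sub_neg_eq_add]
    positivity
  have h_phi {x : ℝ} (hx : 0 ≤ x) :
      phi x = (phiPrimitive x - phiPrimitive 0) / (√3 * π / 4 - phiPrimitive 0) := by
    have h_norm : √3 / π = 1 / (√3 * π / 4 - phiPrimitive 0) := by
      rw [eq_div_iff h_gap.ne', phiPrimitive_zero]
      field_simp
      rw [sq_sqrt zero_le_three]
      norm_num
    rw [phi, integral_arctan_pow_three_div_sq hx, h_norm, one_div_mul_eq_div]
  refine ⟨fun x hx => ?_, ?_⟩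
  · rw [h_phi hx.le, div_pos_iff_of_pos_right h_gap, div_lt_one h_gap, sub_pos,
      sub_lt_sub_iff_right]
    exact ⟨strictMonoOn_phiPrimitive self_mem_Ici hx.le hx,
      strictMonoOn_phiPrimitive.lt_of_tendsto_atTop tendsto_phiPrimitive_atTop hx.le⟩
  · have := (tendsto_phiPrimitive_atTop.sub_const (phiPrimitive 0)).div_const
      (√3 * π / 4 - phiPrimitive 0)
    rw [div_self h_gap.ne'] at this
    refine this.congr' ?_
    filter_upwards [eventually_ge_atTop 0] with x hx
    exact (h_phi hx).symm
end

section
/- Let f solve f' = (1 − φ(f))^{1/2}, f(0) = 0, with φ(x) = (√3/π)∫₀ˣ (arctan u³)/u² du. Then for all r > 0, −f'''(r)/f'(r) − (k−1) f''(r)/f(r) = (√3/(2π)) [ 3/(f(r)⁶ + 1) + (k−3)·(arctan f(r)³)/f(r)³ ], and this expression is strictly positive whenever k ≥ 3. -/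
open Filter Real

/-!
Differentiating the ODE `f' = √(1 - φ(f))` once gives `f'' = -φ'(f)/2`, since the factor
`f'` produced by the chain rule cancels against `2√(1 - φ(f)) = 2f'`. With
`φ'(x) = (√3/π) arctan(x³)/x²` this makes `f''` an explicit function of `f`, and a second
differentiation gives `f'''/f' = -(√3/(2π)) (3/(f⁶+1) - 2 arctan(f³)/f³)`; the formula is then
algebra. Positivity for `k ≥ 3` follows from `arctan(f³) ≥ 0`.
-/

lemma abs_arctan_le_abs (x : ℝ) : |arctan x| ≤ |x| := by
  have arctan_le_self : ∀ y, 0 ≤ y → arctan y ≤ y := fun y hy => by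
    simpa only [tan_arctan] using le_tan (arctan_nonneg.mpr hy) (arctan_lt_pi_div_two y)
  rcases le_total 0 x with hx | hx
  · rw [abs_of_nonneg (arctan_nonneg.mpr hx), abs_of_nonneg hx]
    exact arctan_le_self x hx
  · rw [abs_of_nonpos (arctan_le_zero.mpr hx), abs_of_nonpos hx, ← arctan_neg]
    exact arctan_le_self (-x) (neg_nonneg.mpr hx)

lemma continuous_arctan_pow_three_div_sq : Continuous fun u : ℝ => arctan (u ^ 3) / u ^ 2 := by
  refine continuous_iff_continuousAt.mpr fun x => ?_
  rcases eq_or_ne x 0 with rfl | hx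
  · have hbound : ∀ u : ℝ, ‖arctan (u ^ 3) / u ^ 2‖ ≤ |u| := fun u => by
      rcases eq_or_ne u 0 with rfl | hu
      · simp
      · rw [norm_div, norm_pow, Real.norm_eq_abs, div_le_iff₀ (by positivity)]
        calc |arctan (u ^ 3)| ≤ |u ^ 3| := abs_arctan_le_abs _
          _ = |u| * |u| ^ 2 := by rw [abs_pow]; ring
    simpa [ContinuousAt] using
      squeeze_zero_norm hbound (by simpa using (continuous_abs.tendsto (0:ℝ)))
  · exact ((continuous_arctan.comp (continuous_pow 3)).continuousAt).div
      (continuous_pow 2).continuousAt (pow_ne_zero 2 hx)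

lemma hasDerivAt_phi (x : ℝ) : HasDerivAt phi (√3 / π * (arctan (x ^ 3) / x ^ 2)) x :=
  ((continuous_arctan_pow_three_div_sq.integral_hasStrictDerivAt 0 x).hasDerivAt).const_mul _

lemma hasDerivAt_arctan_pow_three_div_sq {x : ℝ} (hx : x ≠ 0) :
    HasDerivAt (fun x => arctan (x ^ 3) / x ^ 2)
      (3 / (x ^ 6 + 1) - 2 * arctan (x ^ 3) / x ^ 3) x := by
  have h : HasDerivAt (fun x => arctan (x ^ 3) / x ^ 2) _ x :=
    ((hasDerivAt_pow 3 x).arctan).div (hasDerivAt_pow 2 x) (pow_ne_zero 2 hx)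
  refine h.congr_deriv ?_
  field_simp
  ring

lemma hasDerivAt_deriv_of_hasDerivAt_sqrt_comp {f G : ℝ → ℝ} {g r : ℝ}
    (hf : ∀ᶠ t in nhds r, HasDerivAt f (√(G (f t))) t) (hG : HasDerivAt G g (f r))
    (hpos : 0 < √(G (f r))) : HasDerivAt (deriv f) (g / 2) r := by
  have hsqrt := (hG.comp r hf.self_of_nhds).sqrt (sqrt_pos.mp hpos).ne'
  refine (hsqrt.congr_of_eventuallyEq ?_).congr_deriv ?_
  · filter_upwards [hf] with t ht using ht.deriv
  · rw [Function.comp_apply]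
    field_simp

theorem ricHH_formula_and_positive_general (k : ℕ) (f : ℝ → ℝ)
    (hode : ∀ r ∈ Set.Ici (0:ℝ), HasDerivAt f (Real.sqrt (1 - phi (f r))) r)
    (hfpos : ∀ r > (0:ℝ), 0 < f r) (hf'pos : ∀ r > (0:ℝ), 0 < deriv f r) :
    ∀ r > (0:ℝ),
      (-(iteratedDeriv 3 f r) / deriv f r
          - (k - 1 : ℝ) * (iteratedDeriv 2 f r) / f r
        = (Real.sqrt 3 / (2 * π)) *
            (3 / ((f r) ^ 6 + 1) + (k - 3 : ℝ) * Real.arctan ((f r) ^ 3) / (f r) ^ 3)) ∧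
      (3 ≤ k →
        0 < -(iteratedDeriv 3 f r) / deriv f r
            - (k - 1 : ℝ) * (iteratedDeriv 2 f r) / f r) := by
  have hode_near : ∀ r > (0:ℝ), ∀ᶠ t in nhds r, HasDerivAt f (√(1 - phi (f t))) t :=
    fun r hr => eventually_of_mem (Ioi_mem_nhds hr) fun t ht => hode t (Set.mem_Ici.mpr ht.le)
  have hf2 : ∀ r > (0:ℝ), HasDerivAt (deriv f) (-(√3 / π * (arctan (f r ^ 3) / f r ^ 2)) / 2) r :=
    fun r hr => hasDerivAt_deriv_of_hasDerivAt_sqrt_comp (hode_near r hr)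
      ((hasDerivAt_phi (f r)).const_sub 1) ((hode r hr.le).deriv ▸ hf'pos r hr)
  intro r hr
  have hf1 : HasDerivAt f (deriv f r) r := (hode r hr.le).differentiableAt.hasDerivAt
  have hf3 : HasDerivAt (deriv (deriv f)) (-(√3 / π * ((3 / (f r ^ 6 + 1)
      - 2 * arctan (f r ^ 3) / f r ^ 3) * deriv f r)) / 2) r := by
    refine ((((hasDerivAt_arctan_pow_three_div_sq (hfpos r hr).ne').comp r hf1).const_mul _).neg
      |>.div_const 2).congr_of_eventuallyEq ?_
    filter_upwards [Ioi_mem_nhds hr] with t ht using (hf2 t ht).deriv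
  have formula : -(iteratedDeriv 3 f r) / deriv f r - (k - 1 : ℝ) * (iteratedDeriv 2 f r) / f r
      = √3 / (2 * π) * (3 / (f r ^ 6 + 1) + (k - 3 : ℝ) * arctan (f r ^ 3) / f r ^ 3) := by
    rw [iteratedDeriv_succ, iteratedDeriv_succ, iteratedDeriv_one, hf3.deriv, (hf2 r hr).deriv]
    have := hfpos r hr
    have := hf'pos r hr
    field_simp
    ring
  refine ⟨formula, fun hk => formula ▸ ?_⟩
  have hk3 : (0:ℝ) ≤ k - 3 := by
    rw [sub_nonneg]
    exact_mod_cast hk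
  have := hfpos r hr
  positivity

theorem ricHH_formula_and_positive (k : ℕ) (f : ℝ → ℝ)
    (hf0 : f 0 = 0)
    (hode : ∀ r ∈ Set.Ici (0:ℝ), HasDerivAt f (Real.sqrt (1 - phi (f r))) r)
    (hfpos : ∀ r > (0:ℝ), 0 < f r) (hf'pos : ∀ r > (0:ℝ), 0 < deriv f r) :
    ∀ r > (0:ℝ),
      (-(iteratedDeriv 3 f r) / deriv f r
          - (k - 1 : ℝ) * (iteratedDeriv 2 f r) / f r
        = (Real.sqrt 3 / (2 * π)) *
            (3 / ((f r) ^ 6 + 1) + (k - 3 : ℝ) * Real.arctan ((f r) ^ 3) / (f r) ^ 3)) ∧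
      (3 ≤ k →
        0 < -(iteratedDeriv 3 f r) / deriv f r
            - (k - 1 : ℝ) * (iteratedDeriv 2 f r) / f r) :=
  ricHH_formula_and_positive_general k f hode hfpos hf'pos
end

section
/- Let N be a complete Riemannian manifold with positive Ricci curvature, Γ a group acting on N by isometries, p̃ ∈ N, and R > 0. Suppose c : [0,∞) → N is a unit-speed ray starting at p̃ whose image is contained in ∪_{g∈Γ} g·B̄_R(p̃) (e.g., c is the lift of a bounded curve under a normal Riemannian covering with deck group Γ). Then a contradiction follows; i.e., no ray starting at p̃ can have image contained in the Γ-orbit of a fixed compact ball. -/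
/-!
Pulling the ray back by isometries `gₙ` with `c n ∈ B̄_R(gₙ p̃)` yields isometric curves `s ↦ gₙ⁻¹ (c (n + s))`, defined on `[-n, ∞)`, whose base points stay in
`B̄_R(p̃)`. By properness they have a limit point along an ultrafilter, and that limit is a
line; the splitting theorem then splits `N`, which positive Ricci curvature forbids.
-/

universe u

/-- `N` splits off a line isometrically: there is a metric space `Y'` and a bijection
`N ≃ ℝ × Y'` under which the distance of `N` is the Euclidean product distance
√((s−t)² + d(y,y')²). -/
def SplitsOffLine (N : Type u) [MetricSpace N] : Prop :=
  ∃ (Y' : Type u) (_ : MetricSpace Y') (e : N ≃ ℝ × Y'),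
    ∀ a b : N, dist a b =
      Real.sqrt (((e a).1 - (e b).1) ^ 2 + dist (e a).2 (e b).2 ^ 2)

open Filter Metric Topology

section

variable {N : Type*} [PseudoMetricSpace N] [ProperSpace N]

theorem exists_line_of_eventually_isometric {ι : Type*} {l : Filter ι} [l.NeBot]
    {f : ι → ℝ → N} {p : N} {R : ℝ} (hbase : ∀ᶠ j in l, dist (f j 0) p ≤ R)
    (hiso : ∀ s t, ∀ᶠ j in l, dist (f j s) (f j t) = |s - t|) :
    ∃ γ : ℝ → N, ∀ s t, dist (γ s) (γ t) = |s - t| := by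
  set U := Ultrafilter.of l
  have hUl : (U : Filter ι) ≤ l := Ultrafilter.of_le l
  have hlim : ∀ s, ∃ x, Tendsto (fun j => f j s) U (𝓝 x) := by
    intro s
    have hmem : ∀ᶠ j in l, f j s ∈ closedBall p (|s| + R) := by
      filter_upwards [hbase, hiso s 0] with j hj hs
      calc dist (f j s) p ≤ dist (f j s) (f j 0) + dist (f j 0) p := dist_triangle _ _ _
        _ ≤ |s| + R := by rw [hs, sub_zero]; gcongr
    obtain ⟨x, -, hx⟩ := (isCompact_closedBall p (|s| + R)).ultrafilter_le_nhds
      (U.map fun j => f j s) (le_principal_iff.2 (hUl hmem))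
    exact ⟨x, hx⟩
  choose γ hγ using hlim
  refine ⟨γ, fun s t => tendsto_nhds_unique ((hγ s).dist (hγ t)) ?_⟩
  exact tendsto_const_nhds.congr' ((hiso s t).filter_mono hUl |>.mono fun j hj => hj.symm)

theorem exists_line_of_ray_near_isometry_orbit {c : ℝ → N} {p : N} {R : ℝ}
    (hray : ∀ s ∈ Set.Ici (0 : ℝ), ∀ t ∈ Set.Ici (0 : ℝ), dist (c s) (c t) = |s - t|)
    (hnear : ∀ t ≥ (0 : ℝ), ∃ g : N ≃ᵢ N, dist (c t) (g p) ≤ R) :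
    ∃ γ : ℝ → N, ∀ s t, dist (γ s) (γ t) = |s - t| := by
  choose g hg using fun n : ℕ => hnear n n.cast_nonneg
  have hshift : ∀ s : ℝ, ∀ᶠ n : ℕ in atTop, 0 ≤ (n : ℝ) + s := fun s =>
    (tendsto_natCast_atTop_atTop.eventually_ge_atTop (-s)).mono fun n hn => by linarith
  refine exists_line_of_eventually_isometric (l := atTop)
    (f := fun n s => (g n).symm (c (n + s))) (p := p) (R := R) ?_ fun s t => ?_
  · refine Eventually.of_forall fun n => ?_
    rw [add_zero, ← (g n).dist_eq, IsometryEquiv.apply_symm_apply]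
    exact hg n
  · filter_upwards [hshift s, hshift t] with n hs ht
    rw [IsometryEquiv.dist_eq, hray _ hs _ ht, add_sub_add_left_eq_sub]

end

theorem no_ray_in_orbit_of_ball_general
    {N : Type u} [MetricSpace N] [ProperSpace N]
    (hsplitting_thm : (∃ γ : ℝ → N, ∀ s t : ℝ, dist (γ s) (γ t) = |s - t|) →
      SplitsOffLine N)
    (hno_split : ¬ SplitsOffLine N)
    (Γ : Subgroup (N ≃ᵢ N)) (ptilde : N) (R : ℝ)
    (c : ℝ → N)
    (hray : ∀ s ∈ Set.Ici (0:ℝ), ∀ t ∈ Set.Ici (0:ℝ), dist (c s) (c t) = |s - t|)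
    (himage : ∀ t ≥ (0:ℝ), ∃ g ∈ Γ, c t ∈ Metric.closedBall (g ptilde) R) :
    False := by
  refine hno_split (hsplitting_thm (exists_line_of_ray_near_isometry_orbit (p := ptilde)
    (R := R) hray fun t ht => ?_))
  obtain ⟨g, -, hg⟩ := himage t ht
  exact ⟨g, hg⟩

theorem no_ray_in_orbit_of_ball
    {N : Type u} [MetricSpace N] [ProperSpace N] [CompleteSpace N]
    (hgeo : ∀ x y : N, ∃ z : N, dist x z = dist x y / 2 ∧ dist z y = dist x y / 2)
    (hsplitting_thm : (∃ γ : ℝ → N, ∀ s t : ℝ, dist (γ s) (γ t) = |s - t|) →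
      SplitsOffLine N)
    (hno_split : ¬ SplitsOffLine N)
    (Γ : Subgroup (N ≃ᵢ N)) (ptilde : N) (R : ℝ) (hR : 0 < R)
    (c : ℝ → N) (hc0 : c 0 = ptilde)
    (hray : ∀ s ∈ Set.Ici (0:ℝ), ∀ t ∈ Set.Ici (0:ℝ), dist (c s) (c t) = |s - t|)
    (himage : ∀ t ≥ (0:ℝ), ∃ g ∈ Γ, c t ∈ Metric.closedBall (g ptilde) R) :
    False :=
  no_ray_in_orbit_of_ball_general hsplitting_thm hno_split Γ ptilde R c hray himage
end
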